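/- Let (A, μ, α, β) be a regular BiHom-alternative algebra (α and β invertible) and let L^⋆, R^⋆: A → End(A*) be the coadjoint actions given by ⟨L^⋆(x)(ξ), y⟩ = ⟨ξ, α⁻²β(x)·α⁻¹β⁻¹(y)⟩ and ⟨R^⋆(x)(ξ), y⟩ = ⟨ξ, α⁻¹β⁻¹(y)·αβ⁻²(x)⟩. Then the direct sum A ⊕ A* with product μ_{A⊕A*}(x+ξ, y+η) = μ(x,y) + R^⋆(x)(η) + L^⋆(y)(ξ) and structure maps α⊕(α⁻¹)* and β⊕(β⁻¹)* is a BiHom-alternative algebra. -/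

import Mathlib

/-- The BiHom-associator `as_{α,β}(x,y,z) = (xy)β(z) − α(x)(yz)`. -/
def biAssoc {A : Type*} [AddCommGroup A] (mul : A → A → A) (α β : A → A)
    (x y z : A) : A :=
  mul (mul x y) (β z) - mul (α x) (mul y z)

/-- A BiHom-algebra `(A, μ, α, β)`. -/
structure IsBiHomAlg (K : Type*) {A : Type*} [Field K] [AddCommGroup A] [Module K A]
    (mul : A → A → A) (α β : A → A) : Prop where
  mul_lin_left : ∀ y, IsLinearMap K fun x => mul x y
  mul_lin_right : ∀ x, IsLinearMap K (mul x)
  alpha_lin : IsLinearMap K α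
  beta_lin : IsLinearMap K β
  alpha_beta_comm : ∀ x, α (β x) = β (α x)
  alpha_mul : ∀ x y, α (mul x y) = mul (α x) (α y)
  beta_mul : ∀ x y, β (mul x y) = mul (β x) (β y)

/-- A BiHom-alternative algebra. -/
structure IsBiHomAlt (K : Type*) {A : Type*} [Field K] [AddCommGroup A] [Module K A]
    (mul : A → A → A) (α β : A → A) extends IsBiHomAlg K mul α β : Prop where
  left_alt : ∀ x y z,
    biAssoc mul α β (β x) (α y) z + biAssoc mul α β (β y) (α x) z = 0
  right_alt : ∀ x y z,
    biAssoc mul α β x (β y) (α z) + biAssoc mul α β x (β z) (α y) = 0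

/-- A representation (bimodule) `(V, ℓ, r, φ, ψ)` of a BiHom-alternative algebra. -/
structure IsBiHomRep (K : Type*) {A V : Type*} [Field K] [AddCommGroup A] [Module K A]
    [AddCommGroup V] [Module K V] (mul : A → A → A) (α β : A → A)
    (l r : A → Module.End K V) (φ ψ : Module.End K V) : Prop where
  l_lin : IsLinearMap K l
  r_lin : IsLinearMap K r
  phi_psi_comm : ∀ v, φ (ψ v) = ψ (φ v)
  phi_l : ∀ x v, φ (l x v) = l (α x) (φ v)
  phi_r : ∀ x v, φ (r x v) = r (α x) (φ v)
  psi_l : ∀ x v, ψ (l x v) = l (β x) (ψ v)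
  psi_r : ∀ x v, ψ (r x v) = r (β x) (ψ v)
  rep1 : ∀ x v, l (mul (β x) (α x)) (ψ v) = l (α (β x)) (l (α x) v)
  rep2 : ∀ x v, r (mul (β x) (α x)) (φ v) = r (α (β x)) (r (β x) v)
  rep3 : ∀ x y v, r (β y) (l (β x) (φ v)) - l (α (β x)) (r y (φ v))
      = r (mul (α x) y) (φ (ψ v)) - r (β y) (r (α x) (ψ v))
  rep4 : ∀ x y v, l (α y) (r (α x) (ψ v)) - r (α (β x)) (l y (ψ v))
      = l (mul y (β x)) (φ (ψ v)) - l (α y) (l (β x) (φ v))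

/-!
The two alternativity identities of `A` combine into the cyclic identity
`as(β²x, β²y, α²z) = as(β²z, αβx, αβy)`. Evaluated at a vector, the `A*`-component of an
associator in `A ⊕ A*` is a sum of three terms, one for each slot, each a functional applied
to an associator of `A`. In each of the two alternativity identities of `A ⊕ A*`, one of the
three slots cancels by the corresponding identity of `A` and the other two by the cyclic
identity, which for invertible `α`, `β` reads `α⁻¹ as(x, y, αβ⁻²z) = β⁻¹ as(α⁻²βz, x, y)`.
-/

namespace IsBiHomAlt

variable {K : Type*} [Field K] {A : Type*} [AddCommGroup A] [Module K A]
  {mul : A → A → A}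

theorem biAssoc_cyclic {α β : A → A} (h : IsBiHomAlt K mul α β) (x y z : A) :
    biAssoc mul α β (β (β x)) (β (β y)) (α (α z))
      = biAssoc mul α β (β (β z)) (α (β x)) (α (β y)) := by
  have hright := h.right_alt (β (β x)) (β y) (α z)
  have hleft := h.left_alt (β x) (β z) (α (β y))
  rw [← h.alpha_beta_comm z] at hright
  linear_combination (norm := abel_nf) hright - hleft

end IsBiHomAlt

namespace IsBiHomAlg

variable {K : Type*} [Field K] {A : Type*} [AddCommGroup A] [Module K A]
  {mul : A → A → A} {α β : A ≃ₗ[K] A} (h : IsBiHomAlg K mul α β)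
include h

theorem mul_add (x y z : A) : mul x (y + z) = mul x y + mul x z :=
  (h.mul_lin_right x).map_add y z

theorem add_mul (x y z : A) : mul (x + y) z = mul x z + mul y z :=
  (h.mul_lin_left z).map_add x y

theorem mul_smul (c : K) (x y : A) : mul x (c • y) = c • mul x y :=
  (h.mul_lin_right x).map_smul c y

theorem smul_mul (c : K) (x y : A) : mul (c • x) y = c • mul x y :=
  (h.mul_lin_left y).map_smul c x

theorem alpha_symm_mul (x y : A) : α.symm (mul x y) = mul (α.symm x) (α.symm y) :=
  α.injective (by simp [h.alpha_mul])

theorem beta_symm_mul (x y : A) : β.symm (mul x y) = mul (β.symm x) (β.symm y) :=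
  β.injective (by simp [h.beta_mul])

/- The next four lemmas move `α^{±1}` outside `β^{±1}`; together with
`LinearEquiv.symm_apply_apply` and `LinearEquiv.apply_symm_apply` they bring every word in
`α^{±1}`, `β^{±1}` to a reduced normal form, the one used by all the `simp only` calls below. -/

theorem beta_alpha (x : A) : β (α x) = α (β x) :=
  (h.alpha_beta_comm x).symm

theorem beta_alpha_symm (x : A) : β (α.symm x) = α.symm (β x) :=
  α.injective (by rw [h.alpha_beta_comm]; simp)

theorem beta_symm_alpha (x : A) : β.symm (α x) = α (β.symm x) :=
  β.injective (by rw [← h.alpha_beta_comm]; simp)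

theorem beta_symm_alpha_symm (x : A) : β.symm (α.symm x) = α.symm (β.symm x) :=
  β.injective (by rw [h.beta_alpha_symm]; simp)

def coadjointR (x : A) : Module.Dual K A →ₗ[K] Module.Dual K A :=
  ((IsLinearMap.mk' (fun z => mul z (α (β.symm (β.symm x)))) (h.mul_lin_left _)) ∘ₗ
    (α.symm.toLinearMap ∘ₗ β.symm.toLinearMap)).dualMap

def coadjointL (x : A) : Module.Dual K A →ₗ[K] Module.Dual K A :=
  ((IsLinearMap.mk' (mul (α.symm (α.symm (β x)))) (h.mul_lin_right _)) ∘ₗ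
    (α.symm.toLinearMap ∘ₗ β.symm.toLinearMap)).dualMap

def semidirectMul (p q : A × Module.Dual K A) :
    A × Module.Dual K A :=
  (mul p.1 q.1, h.coadjointR p.1 q.2 + h.coadjointL q.1 p.2)

@[simp]
theorem coadjointR_apply (x : A) (η : Module.Dual K A) (w : A) :
    h.coadjointR x η w = η (mul (α.symm (β.symm w)) (α (β.symm (β.symm x)))) := rfl

@[simp]
theorem coadjointL_apply (x : A) (ξ : Module.Dual K A) (w : A) :
    h.coadjointL x ξ w = ξ (mul (α.symm (α.symm (β x))) (α.symm (β.symm w))) := rfl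

theorem isBiHomAlg_semidirectMul :
    IsBiHomAlg K h.semidirectMul (α.prodCongr α.symm.dualMap) (β.prodCongr β.symm.dualMap) where
  mul_lin_left q := ⟨fun p p' => by ext <;> simp [semidirectMul, h.add_mul, h.mul_add]; ring,
    fun c p => by ext <;> simp [semidirectMul, h.smul_mul, h.mul_smul]⟩
  mul_lin_right p := ⟨fun q q' => by ext <;> simp [semidirectMul, h.add_mul, h.mul_add]; ring,
    fun c q => by ext <;> simp [semidirectMul, h.smul_mul, h.mul_smul]⟩
  alpha_lin := (α.prodCongr α.symm.dualMap).toLinearMap.isLinear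
  beta_lin := (β.prodCongr β.symm.dualMap).toLinearMap.isLinear
  alpha_beta_comm p := by ext <;> simp [h.alpha_beta_comm, h.beta_symm_alpha_symm]
  alpha_mul p q := by
    ext <;> simp [semidirectMul, h.alpha_mul, h.alpha_symm_mul, h.beta_alpha, h.beta_symm_alpha,
      h.beta_symm_alpha_symm]
  beta_mul p q := by
    ext <;> simp [semidirectMul, h.beta_mul, h.beta_symm_mul, h.beta_symm_alpha,
      h.beta_symm_alpha_symm]

theorem semidirectMul_biAssoc_snd_apply (p q r : A × Module.Dual K A) (a : A) :
    (biAssoc h.semidirectMul (α.prodCongr α.symm.dualMap) (β.prodCongr β.symm.dualMap)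
      p q r).2 (α (α (β (β a)))) =
      q.2 (biAssoc mul α β (α.symm (α.symm (α.symm (β r.1)))) a
        (α (β.symm (β.symm (β.symm p.1)))))
      - p.2 (biAssoc mul α β (α.symm (α.symm (α.symm (β q.1))))
        (α.symm (α.symm (α.symm (β r.1)))) a)
      - r.2 (biAssoc mul α β a (α (β.symm (β.symm (β.symm p.1))))
        (α (β.symm (β.symm (β.symm q.1))))) := by
  simp only [biAssoc, semidirectMul, LinearEquiv.prodCongr_apply, Prod.mk_sub_mk,
    LinearMap.sub_apply, LinearMap.add_apply, coadjointR_apply, coadjointL_apply,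
    LinearEquiv.dualMap_apply, map_add, map_sub, h.alpha_mul, h.beta_mul, h.alpha_symm_mul,
    h.beta_symm_mul, h.beta_alpha, h.beta_symm_alpha, h.beta_symm_alpha_symm,
    LinearEquiv.symm_apply_apply, LinearEquiv.apply_symm_apply]
  ring

end IsBiHomAlg

namespace IsBiHomAlt

variable {K : Type*} [Field K] {A : Type*} [AddCommGroup A] [Module K A]
  {mul : A → A → A} {α β : A ≃ₗ[K] A} (h : IsBiHomAlt K mul α β)
include h

theorem alpha_symm_biAssoc_eq_beta_symm_biAssoc (x y z : A) :
    α.symm (biAssoc mul α β x y (α (β.symm (β.symm z))))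
      = β.symm (biAssoc mul α β (α.symm (α.symm (β z))) x y) := by
  have := congrArg α.symm
    (h.biAssoc_cyclic (β.symm (β.symm x)) (β.symm (β.symm y)) (α.symm (β.symm (β.symm z))))
  simpa only [biAssoc, map_sub, h.alpha_symm_mul, h.beta_symm_mul, h.beta_alpha,
    h.beta_alpha_symm, h.beta_symm_alpha_symm, LinearEquiv.symm_apply_apply,
    LinearEquiv.apply_symm_apply] using this

theorem semidirectMul_left_alt (p q r : A × Module.Dual K A) :
    biAssoc h.semidirectMul (α.prodCongr α.symm.dualMap) (β.prodCongr β.symm.dualMap)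
        (β.prodCongr β.symm.dualMap p) (α.prodCongr α.symm.dualMap q) r
      + biAssoc h.semidirectMul (α.prodCongr α.symm.dualMap) (β.prodCongr β.symm.dualMap)
        (β.prodCongr β.symm.dualMap q) (α.prodCongr α.symm.dualMap p) r = 0 := by
  ext w
  · exact h.left_alt p.1 q.1 r.1
  obtain ⟨a, rfl⟩ : ∃ a, α (α (β (β a))) = w :=
    ⟨α.symm (α.symm (β.symm (β.symm w))), by simp [h.beta_alpha_symm]⟩
  have hp := congrArg p.2 (h.alpha_symm_biAssoc_eq_beta_symm_biAssoc
    (α.symm (α.symm (α.symm (β r.1)))) a q.1)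
  have hq := congrArg q.2 (h.alpha_symm_biAssoc_eq_beta_symm_biAssoc
    (α.symm (α.symm (α.symm (β r.1)))) a p.1)
  have hr := congrArg r.2 (h.right_alt a (α (β.symm (β.symm (β.symm p.1))))
    (α (β.symm (β.symm (β.symm q.1)))))
  simp only [Prod.snd_add, LinearMap.add_apply, h.semidirectMul_biAssoc_snd_apply, Prod.snd_zero,
    LinearMap.zero_apply, LinearEquiv.prodCongr_apply]
  simp only [biAssoc, map_add, map_sub, map_zero, LinearEquiv.dualMap_apply, h.alpha_symm_mul,
    h.beta_symm_mul, h.beta_alpha, h.beta_symm_alpha, h.beta_symm_alpha_symm,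
    LinearEquiv.symm_apply_apply, LinearEquiv.apply_symm_apply] at hp hq hr ⊢
  linear_combination hp + hq - hr

theorem semidirectMul_right_alt (p q r : A × Module.Dual K A) :
    biAssoc h.semidirectMul (α.prodCongr α.symm.dualMap) (β.prodCongr β.symm.dualMap)
        p (β.prodCongr β.symm.dualMap q) (α.prodCongr α.symm.dualMap r)
      + biAssoc h.semidirectMul (α.prodCongr α.symm.dualMap) (β.prodCongr β.symm.dualMap)
        p (β.prodCongr β.symm.dualMap r) (α.prodCongr α.symm.dualMap q) = 0 := by
  ext w
  · exact h.right_alt p.1 q.1 r.1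
  obtain ⟨a, rfl⟩ : ∃ a, α (α (β (β a))) = w :=
    ⟨α.symm (α.symm (β.symm (β.symm w))), by simp [h.beta_alpha_symm]⟩
  have hp := congrArg p.2 (h.left_alt (α.symm (α.symm (α.symm (β q.1))))
    (α.symm (α.symm (α.symm (β r.1)))) a)
  have hq := congrArg q.2 (h.alpha_symm_biAssoc_eq_beta_symm_biAssoc
    a (α (β.symm (β.symm (β.symm p.1)))) r.1)
  have hr := congrArg r.2 (h.alpha_symm_biAssoc_eq_beta_symm_biAssoc
    a (α (β.symm (β.symm (β.symm p.1)))) q.1)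
  simp only [Prod.snd_add, LinearMap.add_apply, h.semidirectMul_biAssoc_snd_apply, Prod.snd_zero,
    LinearMap.zero_apply, LinearEquiv.prodCongr_apply]
  simp only [biAssoc, map_add, map_sub, map_zero, LinearEquiv.dualMap_apply, h.alpha_symm_mul,
    h.beta_symm_mul, h.beta_alpha, h.beta_alpha_symm, h.beta_symm_alpha, h.beta_symm_alpha_symm,
    LinearEquiv.symm_apply_apply, LinearEquiv.apply_symm_apply] at hp hq hr ⊢
  linear_combination -hp - hq - hr

end IsBiHomAlt

theorem semidirect_coadjoint_isBiHomAlt_general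
    (K : Type*) [Field K] {A : Type*} [AddCommGroup A] [Module K A]
    (mul : A → A → A) (α β : A ≃ₗ[K] A) (halg : IsBiHomAlt K mul (⇑α) (⇑β)) :
    IsBiHomAlt K
      (fun p q : A × Module.Dual K A =>
        (mul p.1 q.1,
          -- R^⋆(p.1)(q.2)
          ((IsLinearMap.mk' (fun z => mul z (α (β.symm (β.symm p.1))))
            (halg.mul_lin_left (α (β.symm (β.symm p.1))))) ∘ₗ
              (α.symm.toLinearMap ∘ₗ β.symm.toLinearMap)).dualMap q.2
          +
          -- L^⋆(q.1)(p.2)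
          ((IsLinearMap.mk' (mul (α.symm (α.symm (β q.1))))
            (halg.mul_lin_right (α.symm (α.symm (β q.1))))) ∘ₗ
              (α.symm.toLinearMap ∘ₗ β.symm.toLinearMap)).dualMap p.2))
      (fun p => (α p.1, α.symm.toLinearMap.dualMap p.2))
      (fun p => (β p.1, β.symm.toLinearMap.dualMap p.2)) :=
  ⟨halg.toIsBiHomAlg.isBiHomAlg_semidirectMul, halg.semidirectMul_left_alt,
    halg.semidirectMul_right_alt⟩

/-- The semidirect product of a regular BiHom-alternative algebra with its
coadjoint representation: `A ⊕ A*` with product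
`μ(x,y) + R^⋆(x)(η) + L^⋆(y)(ξ)` and structure maps `α⊕(α⁻¹)*`, `β⊕(β⁻¹)*`
is a BiHom-alternative algebra. -/
theorem semidirect_coadjoint_isBiHomAlt
    (K : Type*) [Field K] [CharZero K] {A : Type*} [AddCommGroup A] [Module K A]
    (mul : A → A → A) (α β : A ≃ₗ[K] A) (halg : IsBiHomAlt K mul (⇑α) (⇑β)) :
    IsBiHomAlt K
      (fun p q : A × Module.Dual K A =>
        (mul p.1 q.1,
          -- R^⋆(p.1)(q.2)
          ((IsLinearMap.mk' (fun z => mul z (α (β.symm (β.symm p.1))))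
            (halg.mul_lin_left (α (β.symm (β.symm p.1))))) ∘ₗ
              (α.symm.toLinearMap ∘ₗ β.symm.toLinearMap)).dualMap q.2
          +
          -- L^⋆(q.1)(p.2)
          ((IsLinearMap.mk' (mul (α.symm (α.symm (β q.1))))
            (halg.mul_lin_right (α.symm (α.symm (β q.1))))) ∘ₗ
              (α.symm.toLinearMap ∘ₗ β.symm.toLinearMap)).dualMap p.2))
      (fun p => (α p.1, α.symm.toLinearMap.dualMap p.2))
      (fun p => (β p.1, β.symm.toLinearMap.dualMap p.2)) :=
  semidirect_coadjoint_isBiHomAlt_general K mul α β halg
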